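/- arXiv:2308.00639 — 2 statements merged into one kernel-verified Lean document; each statement's English description precedes it below -/
import Mathlib

section
/- Let I ⊂ S = K[x_1,…,x_n] be a monomial ideal with G(I) = {u_1,…,u_r} ordered so that deg(u_1) ≤ ⋯ ≤ deg(u_r), and let O denote this order. For each i, write (u_1,…,u_{i−1}) : u_i = (w_{i,1},…,w_{i,ℓ_i}) with the w_{i,k} the minimal monomial generators, let A_i = ∪_k supp(w_{i,k}), and write [n] = {s_{i,1},…,s_{i,n}} with A_i = {s_{i,1},…,s_{i,n_i}}. Set f_{i,j} = x_{s_{i,j}} u_i and L_{i,j} = (f_{i',j'} : i' < i, or i' = i and j' < j) : f_{i,j}. Then for j > n_i one has L_{i,j} = (x_{s_{i,ℓ}} : 1 ≤ ℓ ≤ j−1). -/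
/-! # Framework: monomial ideals in `S = K[x_1,…,x_n]`

Monomials are encoded by their exponent vectors in `Fin n →₀ ℕ`; divisibility of
monomials corresponds to the pointwise order, and `u : v = u / gcd(u,v)` corresponds
to truncated subtraction of exponent vectors. -/

open MvPolynomial

noncomputable section

/-- The graded maximal ideal `m = (x_1, …, x_n)` of `K[x_1,…,x_n]`. -/
def maxIdeal (n : ℕ) (K : Type) [Field K] : Ideal (MvPolynomial (Fin n) K) :=
  Ideal.span (Set.range X)

/-- Exponent vectors of monomials in `n` variables. -/
abbrev Expo (n : ℕ) := Fin n →₀ ℕ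

/-- The monomial `x^s` with exponent vector `s`. -/
def mon (n : ℕ) (K : Type) [Field K] (s : Expo n) : MvPolynomial (Fin n) K :=
  monomial s 1

/-- The degree of the monomial with exponent vector `s`. -/
def mdeg {n : ℕ} (s : Expo n) : ℕ := s.sum fun _ e => e

/-- `I` is a monomial ideal: it is generated by monomials. -/
def IsMonomialIdeal (n : ℕ) (K : Type) [Field K]
    (I : Ideal (MvPolynomial (Fin n) K)) : Prop :=
  ∃ A : Set (Expo n), I = Ideal.span (mon n K '' A)

/-- `G(I)`: the (exponent vectors of the) minimal monomial generators of `I`, i.e. the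
monomials of `I` that are minimal with respect to divisibility. -/
def MinGens (n : ℕ) (K : Type) [Field K] (I : Ideal (MvPolynomial (Fin n) K)) :
    Set (Expo n) :=
  {s | mon n K s ∈ I ∧ ∀ t : Expo n, mon n K t ∈ I → t ≤ s → t = s}

/-- Given an order `u_0 < u_1 < ⋯` on monomials, the colon ideal
`(u_0, …, u_{i-1}) : u_i`. -/
def colonPrev (n : ℕ) (K : Type) [Field K] {r : ℕ} (u : Fin r → Expo n) (i : Fin r) :
    Ideal (MvPolynomial (Fin n) K) :=
  Submodule.colon (Ideal.span (mon n K '' (u '' {l : Fin r | l < i})))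
    (Ideal.span {mon n K (u i)})

/-- The ideal `J` is generated by (a set of) variables. -/
def genByVars (n : ℕ) (K : Type) [Field K] (J : Ideal (MvPolynomial (Fin n) K)) : Prop :=
  ∃ T : Set (Fin n), J = Ideal.span ((fun p => (X p : MvPolynomial (Fin n) K)) '' T)

/-- `u` is an admissible order on `G(J)`: it enumerates the minimal monomial
generators, and each colon ideal `(u_0,…,u_{i-1}) : u_i` is generated by variables. -/
def IsLinQuotOrder (n : ℕ) (K : Type) [Field K] (J : Ideal (MvPolynomial (Fin n) K))
    {r : ℕ} (u : Fin r → Expo n) : Prop :=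
  Function.Injective u ∧ Set.range u = MinGens n K J ∧
    ∀ i : Fin r, genByVars n K (colonPrev n K u i)

/-- `J` has linear quotients. -/
def HasLinearQuotients (n : ℕ) (K : Type) [Field K]
    (J : Ideal (MvPolynomial (Fin n) K)) : Prop :=
  ∃ (r : ℕ) (u : Fin r → Expo n), IsLinQuotOrder n K J u

/-- The order `u` is degree increasing. -/
def DegIncr {n r : ℕ} (u : Fin r → Expo n) : Prop :=
  ∀ i i' : Fin r, i ≤ i' → mdeg (u i) ≤ mdeg (u i')

/-- The numerical invariant `λ_{I,O,u_i} = Σ_k (deg w_{i,k} - 1)`, where the `w_{i,k}`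
are the minimal monomial generators of `(u_0,…,u_{i-1}) : u_i`. -/
def lamOrd (n : ℕ) (K : Type) [Field K] {r : ℕ} (u : Fin r → Expo n) (i : Fin r) : ℕ :=
  ∑ᶠ w ∈ MinGens n K (colonPrev n K u i), (mdeg w - 1)

end

noncomputable section

/-- `A_i`: the union of the supports of the minimal monomial generators of
`(u_0,…,u_{i-1}) : u_i`. -/
def Asupp (n : ℕ) (K : Type) [Field K] {r : ℕ} (u : Fin r → Expo n) (i : Fin r) :
    Set (Fin n) :=
  {p | ∃ w ∈ MinGens n K (colonPrev n K u i), p ∈ w.support}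

/-- The exponent vector of `f_{i,j} = x_{s_{i,j}} u_i`, where `s_{i,·} = σ i` is a
chosen enumeration of the variables. -/
def fExp {n r : ℕ} (u : Fin r → Expo n) (σ : Fin r → (Fin n ≃ Fin n))
    (i : Fin r) (j : Fin n) : Expo n :=
  u i + Finsupp.single (σ i j) 1

/-- The exponent vectors of the monomials `f_{i',j'}` preceding `f_{i,j}` in the
lexicographic order `O'`. -/
def prevSet {n r : ℕ} (u : Fin r → Expo n) (σ : Fin r → (Fin n ≃ Fin n))
    (i : Fin r) (j : Fin n) : Set (Expo n) :=
  {v | ∃ (i' : Fin r) (j' : Fin n), (i' < i ∨ (i' = i ∧ j' < j)) ∧ v = fExp u σ i' j'}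

/-- `L_{i,j} = (f_{i',j'} : i' < i, or i' = i and j' < j) : f_{i,j}`. -/
def Lcolon (n : ℕ) (K : Type) [Field K] {r : ℕ} (u : Fin r → Expo n)
    (σ : Fin r → (Fin n ≃ Fin n)) (i : Fin r) (j : Fin n) :
    Ideal (MvPolynomial (Fin n) K) :=
  Submodule.colon (Ideal.span (mon n K '' prevSet u σ i j))
    (Ideal.span {mon n K (fExp u σ i j)})

end

/-! The colon of a monomial ideal by a monomial `x^f` is generated by the monomials `x^(v - f)`,
so `L_{i,j}` is generated by the `f_{i',j'} : f_{i,j}`. For `i' = i` these are the variables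
`x_{s_{i,j'}}` with `j' < j`. For `i' < i`, the monomial `u_{i'} : u_i` lies in
`(u_1,…,u_{i-1}) : u_i`, hence is divisible by one of its minimal generators, which is not `1`
because `u_i` is a minimal generator of `I`. A variable `x_p` dividing that generator has
`p ∈ A_i`, i.e. `p = s_{i,ℓ}` with `ℓ < n_i ≤ j`, and `x_p` divides `f_{i',j'} : f_{i,j}`. -/

namespace Finsupp

variable {α : Type*}

theorem add_single_tsub_add_single {a b : α} (hab : a ≠ b) (u : α →₀ ℕ) :
    (u + single a 1) - (u + single b 1) = single a 1 := by
  classical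
  ext q
  simp only [tsub_apply, add_apply, single_apply]
  split_ifs with ha hb <;> subst_vars <;> simp_all

theorem single_le_add_single_tsub_add_single {u v : α →₀ ℕ} {p : α} (hp : u p < v p)
    (a : α) {b : α} (hb : b ≠ p) :
    single p 1 ≤ (v + single a 1) - (u + single b 1) := by
  classical
  rw [single_le_iff]
  simp only [tsub_apply, add_apply, single_apply, if_neg hb]
  split_ifs <;> omega

end Finsupp

namespace MvPolynomial

variable {σ R : Type*} [CommSemiring R]

theorem colon_span_monomial_image (S : Set (σ →₀ ℕ)) (f : σ →₀ ℕ) :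
    (Ideal.span ((fun s => monomial s (1 : R)) '' S)).colon
        (Ideal.span {monomial f (1 : R)} : Set (MvPolynomial σ R)) =
      Ideal.span ((fun s => monomial s (1 : R)) '' ((· - f) '' S)) := by
  ext g
  have hsupp : (g * monomial f (1 : R)).support = g.support.map (addRightEmbedding f) := by
    rw [← single_eq_monomial]
    exact AddMonoidAlgebra.support_coeff_mul_single g 1 (by simp) f
  rw [Ideal.mem_colon_span_singleton, mem_ideal_span_monomial_image, hsupp,
    mem_ideal_span_monomial_image]
  simp [tsub_le_iff_right]

theorem span_monomial_image_le_of_forall_exists_le {s t : Set (σ →₀ ℕ)}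
    (h : ∀ a ∈ s, ∃ b ∈ t, b ≤ a) :
    Ideal.span ((fun s => monomial s (1 : R)) '' s) ≤
      Ideal.span ((fun s => monomial s (1 : R)) '' t) := by
  rw [Ideal.span_le, Set.image_subset_iff]
  intro a ha
  obtain ⟨b, hb, hba⟩ := h a ha
  have hfactor : monomial a (1 : R) = monomial (a - b) 1 * monomial b 1 := by
    rw [monomial_mul, one_mul, tsub_add_cancel_of_le hba]
  rw [Set.mem_preimage, hfactor]
  exact Ideal.mul_mem_left _ _ (Ideal.subset_span ⟨b, hb, rfl⟩)

end MvPolynomial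

section

variable {n : ℕ} {K : Type} [Field K]

theorem exists_mem_minGens_le {J : Ideal (MvPolynomial (Fin n) K)} {w : Expo n}
    (hw : mon n K w ∈ J) : ∃ t ∈ MinGens n K J, t ≤ w := by
  obtain ⟨t, ⟨htw, htJ⟩, htmin⟩ :=
    wellFounded_lt.has_min {t | t ≤ w ∧ mon n K t ∈ J} ⟨w, le_rfl, hw⟩
  refine ⟨t, ⟨htJ, fun t' ht'J ht't => ?_⟩, htw⟩
  by_contra hne
  exact htmin t' ⟨ht't.trans htw, ht'J⟩ (lt_of_le_of_ne ht't hne)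

theorem colonPrev_eq_span {r : ℕ} (u : Fin r → Expo n) (i : Fin r) :
    colonPrev n K u i =
      Ideal.span ((fun s => monomial s 1) '' ((· - u i) '' (u '' {l | l < i}))) :=
  MvPolynomial.colon_span_monomial_image _ _

theorem exists_mem_Asupp_lt {r : ℕ} {u : Fin r → Expo n} {i i' : Fin r} (hi' : i' < i)
    (hmin : ∀ l < i, ¬ u l ≤ u i) : ∃ p ∈ Asupp n K u i, u i p < u i' p := by
  have hmem : mon n K (u i' - u i) ∈ colonPrev n K u i := by
    rw [colonPrev_eq_span]
    exact Ideal.subset_span ⟨_, ⟨_, ⟨i', hi', rfl⟩, rfl⟩, rfl⟩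
  obtain ⟨t, ht, hle⟩ := exists_mem_minGens_le hmem
  have ht0 : t ≠ 0 := by
    rintro rfl
    have h0 := ht.1
    rw [colonPrev_eq_span, MvPolynomial.mem_ideal_span_monomial_image] at h0
    obtain ⟨_, ⟨_, ⟨l, hl, rfl⟩, rfl⟩, hl0⟩ := h0 0 (by simp [mon])
    exact hmin l hl (tsub_eq_zero_iff_le.1 (le_zero_iff.1 hl0))
  obtain ⟨p, hp⟩ := Finsupp.support_nonempty_iff.2 ht0
  refine ⟨p, ⟨t, ht, hp⟩, ?_⟩
  have := hle p
  rw [Finsupp.mem_support_iff] at hp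
  simp only [Finsupp.tsub_apply] at this
  omega

end

theorem L_colon_beyond_support_general (n : ℕ) (K : Type) [Field K]
    (I : Ideal (MvPolynomial (Fin n) K))
    (r : ℕ) (u : Fin r → Expo n) (hinj : Function.Injective u)
    (hrange : Set.range u = MinGens n K I)
    (σ : Fin r → (Fin n ≃ Fin n)) (nn : Fin r → ℕ)
    (hA : ∀ i : Fin r, Asupp n K u i = ⇑(σ i) '' {t : Fin n | (t : ℕ) < nn i}) :
    ∀ (i : Fin r) (j : Fin n), nn i ≤ (j : ℕ) →
      Lcolon n K u σ i j =
        Ideal.span ((fun ℓ : Fin n => (X (σ i ℓ) : MvPolynomial (Fin n) K)) ''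
          {ℓ : Fin n | ℓ < j}) := by
  intro i j hj
  have hmin : ∀ l < i, ¬ u l ≤ u i := by
    have hgen : ∀ k, u k ∈ MinGens n K I := fun k => hrange ▸ ⟨k, rfl⟩
    exact fun l hl hle => hl.ne (hinj ((hgen i).2 _ (hgen l).1 hle))
  have hX : (fun ℓ : Fin n => (X (σ i ℓ) : MvPolynomial (Fin n) K)) '' {ℓ | ℓ < j} =
      (fun s => monomial s 1) '' ((fun ℓ => Finsupp.single (σ i ℓ) 1) '' {ℓ | ℓ < j}) := by
    rw [Set.image_image]; rfl
  rw [Lcolon]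
  delta mon
  rw [MvPolynomial.colon_span_monomial_image, hX]
  refine le_antisymm (MvPolynomial.span_monomial_image_le_of_forall_exists_le ?_)
    (MvPolynomial.span_monomial_image_le_of_forall_exists_le ?_)
  · rintro _ ⟨_, ⟨i', j', hlt | ⟨hii, hj'⟩, rfl⟩, rfl⟩
    · obtain ⟨p, hpA, hp⟩ := exists_mem_Asupp_lt (K := K) hlt hmin
      rw [hA i] at hpA
      obtain ⟨ℓ, hℓ, rfl⟩ := hpA
      have hℓj : ℓ < j := Fin.lt_def.2 (lt_of_lt_of_le hℓ hj)
      exact ⟨_, ⟨ℓ, hℓj, rfl⟩, Finsupp.single_le_add_single_tsub_add_single hp _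
        ((σ i).injective.ne hℓj.ne')⟩
    · subst i'
      exact ⟨_, ⟨j', hj', rfl⟩,
        (Finsupp.add_single_tsub_add_single ((σ i).injective.ne hj'.ne) _).ge⟩
  · rintro _ ⟨ℓ, hℓ, rfl⟩
    exact ⟨_, ⟨_, ⟨i, ℓ, Or.inr ⟨rfl, hℓ⟩, rfl⟩, rfl⟩,
      (Finsupp.add_single_tsub_add_single ((σ i).injective.ne hℓ.ne) _).le⟩

/-- **(Ficarra–Herzog–Moradi, proof of Theorem 1.5).** Let `I` be a monomial ideal with
`G(I) = {u_1,…,u_r}` ordered so that `deg u_1 ≤ ⋯ ≤ deg u_r`. For each `i`, let `A_i`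
be the union of the supports of the minimal monomial generators of
`(u_1,…,u_{i-1}) : u_i`, and let `σ i` be an enumeration `s_{i,·}` of the variables
whose first `n_i` values exhaust `A_i`. Set `f_{i,j} = x_{σ i j} · u_i` and
`L_{i,j} = (f_{i',j'} : i' < i, or i' = i and j' < j) : f_{i,j}`. Then for `j` beyond
the first `n_i` positions, `L_{i,j} = (x_{σ i ℓ} : ℓ < j)`. (Indices are 0-based, so
"`j > n_i`" reads `n_i ≤ j`.) -/
theorem L_colon_beyond_support (n : ℕ) (K : Type) [Field K]
    (I : Ideal (MvPolynomial (Fin n) K)) (hI : IsMonomialIdeal n K I)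
    (r : ℕ) (u : Fin r → Expo n) (hinj : Function.Injective u)
    (hrange : Set.range u = MinGens n K I) (hdeg : DegIncr u)
    (σ : Fin r → (Fin n ≃ Fin n)) (nn : Fin r → ℕ)
    (hA : ∀ i : Fin r, Asupp n K u i = ⇑(σ i) '' {t : Fin n | (t : ℕ) < nn i}) :
    ∀ (i : Fin r) (j : Fin n), nn i ≤ (j : ℕ) →
      Lcolon n K u σ i j =
        Ideal.span ((fun ℓ : Fin n => (X (σ i ℓ) : MvPolynomial (Fin n) K)) ''
          {ℓ : Fin n | ℓ < j}) :=
  L_colon_beyond_support_general n K I r u hinj hrange σ nn hA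
end

section
/- Let I ⊂ S = K[x_1,…,x_n] be a monomial ideal with G(I) = {u_1,…,u_r} ordered so that deg(u_1) ≤ ⋯ ≤ deg(u_r). For each i, write (u_1,…,u_{i−1}) : u_i = (w_{i,1},…,w_{i,ℓ_i}), let A_i = ∪_k supp(w_{i,k}), and write [n] = {s_{i,1},…,s_{i,n}} with A_i = {s_{i,1},…,s_{i,n_i}}. Set f_{i,j} = x_{s_{i,j}} u_i and L_{i,j} = (f_{i',j'} : i' < i, or i' = i and j' < j) : f_{i,j}. Fix j ≤ n_i, and suppose x_{s_{i,j}} divides w_{i,k} exactly for 1 ≤ k ≤ q_i. Then L_{i,j} = (w_{i,k}/x_{s_{i,j}} : 1 ≤ k ≤ q_i) + (w_{i,k} : q_i < k ≤ ℓ_i) + (x_{s_{i,ℓ}} : 1 ≤ ℓ ≤ j−1). -/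
/-! # Framework: monomial ideals in `S = K[x_1,…,x_n]`

Monomials are encoded by their exponent vectors in `Fin n →₀ ℕ`; divisibility of
monomials corresponds to the pointwise order, and `u : v = u / gcd(u,v)` corresponds
to truncated subtraction of exponent vectors. -/

open MvPolynomial

/-! Both `L_{i,j}` and `(u_1,…,u_{i-1}) : u_i` are colon ideals of monomial ideals by monomials,
so they are generated by the quotients `v : f` of the generators; the claim is a comparison of
generating sets up to divisibility. The generator `(x_q u_{i'}) : f_{i,j}` of `L_{i,j}` with
`i' < i` is a multiple of `w / x_{s_{i,j}}` for a minimal generator `w ∣ u_{i'} : u_i`. Conversely,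
if `x_{s_{i,j}} ∣ w` and `u_l ∣ w u_i` with `l < i`, the divisibility is strict (otherwise the
minimal generator `u_l` would be a proper multiple of `u_i`), so some `x_q u_l` divides `w u_i`,
i.e. `w / x_{s_{i,j}} ∈ L_{i,j}`. -/

open MvPolynomial Finsupp

namespace Finsupp

variable {ι : Type*}

theorem exists_add_single_le_of_lt {a c : ι →₀ ℕ} (h : a < c) : ∃ p, a + single p 1 ≤ c := by
  obtain ⟨p, hp⟩ : ∃ p, a p < c p := by simpa [Finsupp.le_def] using h.not_ge
  refine ⟨p, ?_⟩
  calc a + single p 1 ≤ a + (c - a) := by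
        gcongr; exact single_le_iff.2 (by simp only [tsub_apply]; omega)
    _ = c := add_tsub_cancel_of_le h.le

theorem tsub_single_eq_self {w : ι →₀ ℕ} {p : ι} (h : ¬ single p 1 ≤ w) :
    w - single p 1 = w := by
  have hp : w p = 0 := by simpa [single_le_iff] using h
  ext q
  by_cases hq : p = q
  · subst hq; simp [hp]
  · simp [hq]

theorem tsub_single_image_eq_union (W : Set (ι →₀ ℕ)) (p : ι) :
    {v | ∃ w ∈ W, single p 1 ≤ w ∧ v = w - single p 1} ∪ {w | w ∈ W ∧ ¬ single p 1 ≤ w} =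
      (· - single p 1) '' W := by
  ext v
  constructor
  · rintro (⟨w, hw, -, rfl⟩ | ⟨hv, hpv⟩)
    · exact ⟨w, hw, rfl⟩
    · exact ⟨v, hv, tsub_single_eq_self hpv⟩
  · rintro ⟨w, hw, rfl⟩
    dsimp only
    by_cases hpw : single p 1 ≤ w
    · exact Or.inl ⟨w, hw, hpw, rfl⟩
    · rw [tsub_single_eq_self hpw]
      exact Or.inr ⟨hw, hpw⟩

end Finsupp

namespace MvPolynomial

variable {σ R : Type*} [CommSemiring R]

theorem monomial_one_mem_span_monomial_image_iff [Nontrivial R] {A : Set (σ →₀ ℕ)}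
    {t : σ →₀ ℕ} :
    monomial t (1 : R) ∈ Ideal.span ((fun s => monomial s (1 : R)) '' A) ↔ ∃ a ∈ A, a ≤ t := by
  classical
  rw [mem_ideal_span_monomial_image, support_monomial, if_neg one_ne_zero]
  simp

theorem span_monomial_image_le_span_monomial_image {A B : Set (σ →₀ ℕ)}
    (h : ∀ a ∈ A, ∃ b ∈ B, b ≤ a) :
    Ideal.span ((fun s => monomial s (1 : R)) '' A) ≤
      Ideal.span ((fun s => monomial s (1 : R)) '' B) := by
  rw [Ideal.span_le]
  rintro _ ⟨a, ha, rfl⟩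
  obtain ⟨b, hb, hba⟩ := h a ha
  rw [SetLike.mem_coe, mem_ideal_span_monomial_image]
  intro s hs
  exact ⟨b, hb, Finset.mem_singleton.1 (support_monomial_subset hs) ▸ hba⟩

theorem span_monomial_image_colon (A : Set (σ →₀ ℕ)) (t : σ →₀ ℕ) :
    (Ideal.span ((fun s => monomial s (1 : R)) '' A)).colon (Ideal.span {monomial t (1 : R)}) =
      Ideal.span ((fun s => monomial s (1 : R)) '' ((· - t) '' A)) := by
  ext x
  rw [Ideal.mem_colon_span_singleton, mem_ideal_span_monomial_image,
    mem_ideal_span_monomial_image]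
  simp only [Set.exists_mem_image, tsub_le_iff_right]
  constructor
  · intro h s hs
    apply h (s + t)
    rwa [mem_support_iff, coeff_mul_monomial, mul_one, ← mem_support_iff]
  · intro h s hs
    rw [mem_support_iff, coeff_mul_monomial'] at hs
    split_ifs at hs with hts
    · obtain ⟨a, ha, has⟩ := h (s - t) (mem_support_iff.2 (by simpa using hs))
      exact ⟨a, ha, (tsub_add_cancel_of_le hts) ▸ has⟩
    · exact absurd rfl hs

end MvPolynomial

section MonomialIdeals

variable {n : ℕ} {K : Type} [Field K]

theorem exists_minGens_le {J : Ideal (MvPolynomial (Fin n) K)} {t : Expo n}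
    (ht : mon n K t ∈ J) : ∃ w ∈ MinGens n K J, w ≤ t := by
  have hfin : {t' | t' ≤ t ∧ mon n K t' ∈ J}.Finite := (Set.finite_Iic t).subset fun _ h => h.1
  obtain ⟨w, hw, hmin⟩ := hfin.exists_minimal ⟨t, le_rfl, ht⟩
  exact ⟨w, ⟨hw.2, fun t' ht' hle => le_antisymm hle (hmin ⟨hle.trans hw.1, ht'⟩ hle)⟩, hw.1⟩

variable {r : ℕ} {u : Fin r → Expo n}

theorem mon_mem_colonPrev_iff {i : Fin r} {w : Expo n} :
    mon n K w ∈ colonPrev n K u i ↔ ∃ l < i, u l ≤ w + u i := by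
  rw [colonPrev, Ideal.mem_colon_span_singleton, mon, mon, monomial_mul, one_mul]
  exact monomial_one_mem_span_monomial_image_iff.trans (by simp)

theorem exists_add_single_le_of_mem_colonPrev {I : Ideal (MvPolynomial (Fin n) K)}
    (hrange : Set.range u = MinGens n K I) {i : Fin r} {w : Expo n}
    (hw : mon n K w ∈ colonPrev n K u i) (hw0 : w ≠ 0) :
    ∃ l < i, ∃ q, u l + single q 1 ≤ w + u i := by
  obtain ⟨l, hl, hle⟩ := mon_mem_colonPrev_iff.1 hw
  have hne : u l ≠ w + u i := by
    intro h
    have hmin : u l ∈ MinGens n K I := hrange ▸ Set.mem_range_self l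
    have hui : mon n K (u i) ∈ I := (hrange ▸ Set.mem_range_self i : u i ∈ MinGens n K I).1
    have : u i = u l := hmin.2 _ hui (h ▸ le_add_self)
    exact hw0 (by simpa [this] using h.symm)
  exact ⟨l, hl, exists_add_single_le_of_lt (lt_of_le_of_ne hle hne)⟩

end MonomialIdeals

section LColon

variable {n : ℕ} {K : Type} [Field K] {r : ℕ} {u : Fin r → Expo n} {σ : Fin r → (Fin n ≃ Fin n)}

theorem Lcolon_eq_span (i : Fin r) (j : Fin n) :
    Lcolon n K u σ i j =
      Ideal.span (mon n K '' ((· - fExp u σ i j) '' prevSet u σ i j)) :=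
  span_monomial_image_colon _ _

theorem Lcolon_le_span (i : Fin r) (j : Fin n) :
    Lcolon n K u σ i j ≤
      Ideal.span (mon n K '' ((· - single (σ i j) 1) '' MinGens n K (colonPrev n K u i) ∪
        {v | ∃ ℓ : Fin n, ℓ < j ∧ v = single (σ i ℓ) 1})) := by
  rw [Lcolon_eq_span]
  apply span_monomial_image_le_span_monomial_image
  rintro _ ⟨_, ⟨i', j', hi' | ⟨hii, hj'⟩, rfl⟩, rfl⟩
  · obtain ⟨w, hw, hle⟩ := exists_minGens_le
      (mon_mem_colonPrev_iff.2 ⟨i', hi', le_tsub_add⟩ : mon n K (u i' - u i) ∈ colonPrev n K u i)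
    refine ⟨w - single (σ i j) 1, Or.inl ⟨w, hw, rfl⟩, ?_⟩
    calc w - single (σ i j) 1 ≤ u i' - u i - single (σ i j) 1 := tsub_le_tsub_right hle _
      _ ≤ fExp u σ i' j' - fExp u σ i j := by
        rw [fExp, fExp, tsub_tsub]; exact tsub_le_tsub_right le_self_add _
  · rw [hii]
    refine ⟨single (σ i j') 1, Or.inr ⟨j', hj', rfl⟩, ?_⟩
    have hne : σ i j' ≠ σ i j := (σ i).injective.ne hj'.ne
    simp [fExp, add_tsub_add_eq_tsub_left, single_le_iff, hne]

theorem span_le_Lcolon {I : Ideal (MvPolynomial (Fin n) K)}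
    (hrange : Set.range u = MinGens n K I) (i : Fin r) (j : Fin n) :
    Ideal.span (mon n K '' ((· - single (σ i j) 1) '' MinGens n K (colonPrev n K u i) ∪
        {v | ∃ ℓ : Fin n, ℓ < j ∧ v = single (σ i ℓ) 1})) ≤
      Lcolon n K u σ i j := by
  rw [Lcolon_eq_span]
  apply span_monomial_image_le_span_monomial_image
  simp only [Set.exists_mem_image, tsub_le_iff_right]
  rintro _ (⟨w, hw, rfl⟩ | ⟨ℓ, hℓ, rfl⟩)
  · dsimp only
    by_cases hjw : single (σ i j) 1 ≤ w
    · obtain ⟨l, hl, q, hq⟩ := exists_add_single_le_of_mem_colonPrev hrange hw.1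
        (by rintro rfl; simp at hjw)
      refine ⟨_, ⟨l, (σ l).symm q, Or.inl hl, rfl⟩, ?_⟩
      rwa [fExp, fExp, Equiv.apply_symm_apply, add_comm (u i), ← add_assoc,
        tsub_add_cancel_of_le hjw]
    · obtain ⟨l, hl, hle⟩ := mon_mem_colonPrev_iff.1 hw.1
      refine ⟨_, ⟨l, (σ l).symm (σ i j), Or.inl hl, rfl⟩, ?_⟩
      rw [fExp, fExp, Equiv.apply_symm_apply, tsub_single_eq_self hjw, ← add_assoc]
      gcongr
  · refine ⟨fExp u σ i ℓ, ⟨i, ℓ, Or.inr ⟨rfl, hℓ⟩, rfl⟩, ?_⟩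
    rw [fExp, fExp, add_comm (u i), add_le_add_iff_left]
    exact le_self_add

end LColon

theorem L_colon_within_support_general (n : ℕ) (K : Type) [Field K]
    (I : Ideal (MvPolynomial (Fin n) K))
    (r : ℕ) (u : Fin r → Expo n)
    (hrange : Set.range u = MinGens n K I)
    (σ : Fin r → (Fin n ≃ Fin n)) (nn : Fin r → ℕ) :
    ∀ (i : Fin r) (j : Fin n), (j : ℕ) < nn i →
      Lcolon n K u σ i j =
        Ideal.span (mon n K ''
          ({v | ∃ w ∈ MinGens n K (colonPrev n K u i),
              Finsupp.single (σ i j) 1 ≤ w ∧ v = w - Finsupp.single (σ i j) 1} ∪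
           {w | w ∈ MinGens n K (colonPrev n K u i) ∧ ¬ Finsupp.single (σ i j) 1 ≤ w} ∪
           {v | ∃ ℓ : Fin n, ℓ < j ∧ v = Finsupp.single (σ i ℓ) 1})) := by
  intro i j _
  rw [tsub_single_image_eq_union]
  exact le_antisymm (Lcolon_le_span i j) (span_le_Lcolon hrange i j)

/-- **(Ficarra–Herzog–Moradi, proof of Theorem 1.5).** Same setting as before: `I` a
monomial ideal with a degree-increasing enumeration `u` of `G(I)`, `σ i` an enumeration
of the variables whose first `n_i` values exhaust `A_i`, `f_{i,j} = x_{σ i j} u_i` and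
`L_{i,j}` the colon ideal by the preceding `f`'s. Fix `j` within the first `n_i`
positions. Then `L_{i,j}` is generated by: the monomials `w/x_{σ i j}` for `w` a
minimal monomial generator of `(u_1,…,u_{i-1}) : u_i` divisible by `x_{σ i j}`, the
remaining minimal monomial generators `w`, and the variables `x_{σ i ℓ}` with `ℓ < j`.
(Indices are 0-based, so "`j ≤ n_i`" reads `j < n_i`.) -/
theorem L_colon_within_support (n : ℕ) (K : Type) [Field K]
    (I : Ideal (MvPolynomial (Fin n) K)) (hI : IsMonomialIdeal n K I)
    (r : ℕ) (u : Fin r → Expo n) (hinj : Function.Injective u)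
    (hrange : Set.range u = MinGens n K I) (hdeg : DegIncr u)
    (σ : Fin r → (Fin n ≃ Fin n)) (nn : Fin r → ℕ)
    (hA : ∀ i : Fin r, Asupp n K u i = ⇑(σ i) '' {t : Fin n | (t : ℕ) < nn i}) :
    ∀ (i : Fin r) (j : Fin n), (j : ℕ) < nn i →
      Lcolon n K u σ i j =
        Ideal.span (mon n K ''
          ({v | ∃ w ∈ MinGens n K (colonPrev n K u i),
              Finsupp.single (σ i j) 1 ≤ w ∧ v = w - Finsupp.single (σ i j) 1} ∪
           {w | w ∈ MinGens n K (colonPrev n K u i) ∧ ¬ Finsupp.single (σ i j) 1 ≤ w} ∪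
           {v | ∃ ℓ : Fin n, ℓ < j ∧ v = Finsupp.single (σ i ℓ) 1})) :=
  L_colon_within_support_general n K I r u hrange σ nn
end
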